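/- Comparison of exponents: let ψ : 𝔽[X]^m → {k^r : r ∈ ℤ} ∪ {0} be bounded by 1, non-negative, positive infinitely often. Define C(N,v;ψ) = #{q : ‖q‖_∞ ≤ N, ψ(q) ≥ ‖q‖_∞^{-v}}, γ(v;ψ) = sup{γ : limsup_N C(N,v;ψ)N^{-γ} > 0} when C(N,v;ψ) → ∞, δ(v;ψ) = (n + γ(v;ψ))/(v+1) in that case (0 otherwise), δ(ψ) = sup_{v≥0} δ(v;ψ), and η(ψ) = inf{η : Σ_q ‖q‖_∞^n(ψ(q)/‖q‖_∞)^η < ∞}. Then min{δ(ψ), n} ≥ min{η(ψ), n}. -/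

import Mathlib

open Polynomial MeasureTheory Filter Set
open scoped Classical

noncomputable section

namespace FFapprox

variable {F : Type*} [Field F] [Fintype F]

/-- The absolute value on `𝔽((X⁻¹))`, modelled as `LaurentSeries F` in the
variable `T = X⁻¹`: `|f| = k^(deg_X f) = k^(-order_T f)`. -/
def fabs (f : LaurentSeries F) : ℝ :=
  if f = 0 then 0 else (Fintype.card F : ℝ) ^ (-f.order)

lemma fabs_nonneg (f : LaurentSeries F) : 0 ≤ fabs f := by
  unfold fabs; split
  · exact le_refl 0
  · positivity

lemma one_le_cardF : (1 : ℝ) ≤ (Fintype.card F : ℝ) := by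
  exact_mod_cast Fintype.card_pos

lemma fabs_zero : fabs (0 : LaurentSeries F) = 0 := if_pos rfl

lemma fabs_neg (f : LaurentSeries F) : fabs (-f) = fabs f := by
  unfold fabs
  rw [HahnSeries.order_neg, neg_eq_zero]

lemma fabs_add_le (f g : LaurentSeries F) :
    fabs (f + g) ≤ max (fabs f) (fabs g) := by
  rcases eq_or_ne f 0 with rfl | hf
  · simp [fabs_zero, le_max_iff, le_refl]
  rcases eq_or_ne g 0 with rfl | hg
  · simp [fabs_zero, le_max_iff, le_refl]
  rcases eq_or_ne (f + g) 0 with hfg | hfg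
  · rw [hfg, fabs_zero]
    exact le_max_of_le_left (fabs_nonneg f)
  have horder := HahnSeries.min_order_le_order_add hfg
  unfold fabs
  rw [if_neg hf, if_neg hg, if_neg hfg, le_max_iff]
  rcases min_le_iff.mp (le_refl (min f.order g.order)) with h | h
  · rcases le_or_gt f.order g.order with hle | hlt
    · left
      refine zpow_le_zpow_right₀ one_le_cardF ?_
      simp only [neg_le_neg_iff]
      exact le_trans (by simp [min_eq_left hle]) horder
    · right
      refine zpow_le_zpow_right₀ one_le_cardF ?_
      simp only [neg_le_neg_iff]
      exact le_trans (by simp [min_eq_right hlt.le]) horder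
  · rcases le_or_gt f.order g.order with hle | hlt
    · left
      refine zpow_le_zpow_right₀ one_le_cardF ?_
      simp only [neg_le_neg_iff]
      exact le_trans (by simp [min_eq_left hle]) horder
    · right
      refine zpow_le_zpow_right₀ one_le_cardF ?_
      simp only [neg_le_neg_iff]
      exact le_trans (by simp [min_eq_right hlt.le]) horder

instance : MetricSpace (LaurentSeries F) where
  dist f g := fabs (f - g)
  dist_self f := by simp [fabs_zero]
  dist_comm f g := by
    have : g - f = -(f - g) := by ring
    try simp only []
    rw [this, fabs_neg]
  dist_triangle f g h := by
    have : f - h = (f - g) + (g - h) := by ring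
    try simp only []
    rw [this]
    refine le_trans (fabs_add_le _ _) ?_
    rw [max_le_iff]
    constructor
    · exact le_add_of_nonneg_right (fabs_nonneg _)
    · exact le_add_of_nonneg_left (fabs_nonneg _)
  eq_of_dist_eq_zero := by
    intro f g hfg
    by_contra hne
    have hsub : f - g ≠ 0 := sub_ne_zero.mpr hne
    try simp only [] at hfg
    unfold fabs at hfg
    rw [if_neg hsub] at hfg
    have : (0:ℝ) < (Fintype.card F : ℝ) ^ (-(f-g).order) := by positivity
    linarith

instance : MeasurableSpace (LaurentSeries F) := borel _

instance : BorelSpace (LaurentSeries F) := ⟨rfl⟩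

/-- The embedding of `𝔽[X]` into `𝔽((X⁻¹))`, sending `X` to `T⁻¹`. -/
def pe : Polynomial F →ₐ[F] LaurentSeries F :=
  Polynomial.aeval (HahnSeries.single (-1 : ℤ) (1 : F))

/-- `|q| = k^(deg q)` on polynomials. -/
def pabs (q : Polynomial F) : ℝ :=
  if q = 0 then 0 else (Fintype.card F : ℝ) ^ q.natDegree

/-- sup-norm of a polynomial vector. -/
def qnorm {m : ℕ} (q : Fin m → Polynomial F) : ℝ := ⨆ i, pabs (q i)

/-- sup-norm of a vector of Laurent series. -/
def vnorm {n : ℕ} (v : Fin n → LaurentSeries F) : ℝ := ⨆ i, fabs (v i)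

/-- sup-norm of a matrix. -/
def mnorm {m n : ℕ} (A : Fin m → Fin n → LaurentSeries F) : ℝ := ⨆ i, vnorm (A i)

/-- Distance of a vector to the nearest polynomial vector. -/
def pdist {n : ℕ} (v : Fin n → LaurentSeries F) : ℝ :=
  ⨅ p : Fin n → Polynomial F, vnorm (fun i => v i - pe (p i))

/-- matrix product `q A` of a polynomial row vector with a Laurent-series matrix. -/
def mulVec {m n : ℕ} (q : Fin m → Polynomial F) (A : Fin m → Fin n → LaurentSeries F) :
    Fin n → LaurentSeries F :=
  fun j => ∑ i, pe (q i) * A i j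

/-- The unit cube in the space of `m × n` matrices. -/
def U (F : Type*) [Field F] [Fintype F] (m n : ℕ) : Set (Fin m → Fin n → LaurentSeries F) :=
  {A | ∀ i j, fabs (A i j) < 1}

/-- The exponent of convergence `v(S)`. -/
def expConv {m : ℕ} (S : Set (Fin m → Polynomial F)) : ℝ :=
  sInf {v : ℝ | Summable fun q : S => qnorm (q : Fin m → Polynomial F) ^ (-v)}

/-- The set `W_S(m,n;ψ)`. -/
def WS {m n : ℕ} (S : Set (Fin m → Polynomial F))
    (ψ : (Fin m → Polynomial F) → ℝ) : Set (Fin m → Fin n → LaurentSeries F) :=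
  {A | {q ∈ S | pdist (mulVec q A) < ψ q}.Infinite}


open scoped ENNReal NNReal

/-- The polynomial Euler totient `Φ(q)`. -/
def Phi (q : Polynomial F) : ℕ :=
  Nat.card {q' : Polynomial F // pabs q' < pabs q ∧ q'.Monic ∧ IsCoprime q q'}

/-- The unit cube in `𝔽((X⁻¹))ⁿ`. -/
def U1 (F : Type*) [Field F] [Fintype F] (n : ℕ) : Set (Fin n → LaurentSeries F) :=
  {A | ∀ i, fabs (A i) < 1}

/-- `B(q,ε) = {A ∈ U : ‖qA‖ < ε}`. -/
def BallB {m n : ℕ} (q : Fin m → Polynomial F) (ε : ℝ) :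
    Set (Fin m → Fin n → LaurentSeries F) :=
  {A ∈ U F m n | pdist (mulVec q A) < ε}

/-- `B'(q,ε)` (one-dimensional case, with coprimality). -/
def BallB' {n : ℕ} (q : Polynomial F) (ε : ℝ) : Set (Fin n → LaurentSeries F) :=
  {A ∈ U1 F n | ∃ p : Fin n → Polynomial F, (∀ i, IsCoprime q (p i)) ∧
    vnorm (fun i => pe q * A i - pe (p i)) < ε}

/-- gcd of the coordinates of a polynomial vector. -/
def gcdv {m : ℕ} (q : Fin m → Polynomial F) : Polynomial F := Finset.univ.gcd q

/-- `B''(q,ε)` (higher-dimensional case, with coprimality to the gcd of coordinates). -/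
def BallB'' {m n : ℕ} (q : Fin m → Polynomial F) (ε : ℝ) :
    Set (Fin m → Fin n → LaurentSeries F) :=
  {A ∈ U F m n | ∃ p : Fin n → Polynomial F, (∀ j, IsCoprime (gcdv q) (p j)) ∧
    vnorm (fun j => mulVec q A j - pe (p j)) < ε}

/-- The resonant affine subspace `H(q,p) = {A ∈ U : qA = p}`. -/
def Hqp {m n : ℕ} (q : Fin m → Polynomial F) (p : Fin n → Polynomial F) :
    Set (Fin m → Fin n → LaurentSeries F) :=
  {A ∈ U F m n | mulVec q A = fun j => pe (p j)}

/-- The counting function `C(N;S)`. -/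
def CountS {m : ℕ} (S : Set (Fin m → Polynomial F)) (N : ℕ) : ℕ :=
  Nat.card {q : Fin m → Polynomial F // q ∈ S ∧ qnorm q ≤ N}

/-- The growth exponent `γ(S)`. -/
def gammaS {m : ℕ} (S : Set (Fin m → Polynomial F)) : ℝ :=
  sSup {γ : ℝ | 0 < Filter.atTop.limsup (fun N : ℕ => (CountS S N : ℝ≥0∞) * (N : ℝ≥0∞) ^ (-γ))}

/-- The exponent `η(ψ)`. -/
def etaExp {m : ℕ} (n : ℕ) (ψ : (Fin m → Polynomial F) → ℝ) : ℝ :=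
  sInf {η : ℝ | Summable (fun q : Fin m → Polynomial F => qnorm q ^ n * (ψ q / qnorm q) ^ η)}

/-- The exponent of convergence of `S ⊆ 𝔽[X]` (one-dimensional). -/
def expConv1 (S : Set (Polynomial F)) : ℝ :=
  sInf {v : ℝ | Summable fun q : S => pabs (q : Polynomial F) ^ (-v)}


/-- The counting function `C(N,v;ψ)`. -/
def Cpsi {m : ℕ} (ψ : (Fin m → Polynomial F) → ℝ) (v : ℝ) (N : ℕ) : ℕ :=
  Nat.card {q : Fin m → Polynomial F // qnorm q ≤ N ∧ qnorm q ^ (-v) ≤ ψ q}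

/-- The growth exponent `γ(v;ψ)`. -/
def gammaPsi {m : ℕ} (ψ : (Fin m → Polynomial F) → ℝ) (v : ℝ) : ℝ :=
  sSup {γ : ℝ | 0 < Filter.atTop.limsup
    (fun N : ℕ => (Cpsi ψ v N : ℝ≥0∞) * (N : ℝ≥0∞) ^ (-γ))}

/-- `δ(v;ψ)`. -/
def deltaPsiV {m : ℕ} (n : ℕ) (ψ : (Fin m → Polynomial F) → ℝ) (v : ℝ) : ℝ :=
  if Filter.Tendsto (fun N : ℕ => Cpsi ψ v N) Filter.atTop Filter.atTop then
    ((n : ℝ) + gammaPsi ψ v) / (v + 1)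
  else 0

/-- `δ(ψ) = sup_{v ≥ 0} δ(v;ψ)`. -/
def deltaPsi {m : ℕ} (n : ℕ) (ψ : (Fin m → Polynomial F) → ℝ) : ℝ :=
  sSup {d : ℝ | ∃ v : ℝ, 0 ≤ v ∧ d = deltaPsiV n ψ v}

/-! Let `δ(ψ) < η` and pick `δ(ψ) < η₁ < η` and a small step `ε > 0`. Every nonzero `q` either has
`ψ(q) ≤ ‖q‖^{-V}` for a large `V`, or lies in a slice `‖q‖^{-(j+1)ε} ≤ ψ(q) ≤ ‖q‖^{-jε}` with
`j < V / ε`. On the `j`-th slice the summand of `η(ψ)` is at most `‖q‖^{n-(1+jε)η}`, and since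
`δ((j+1)ε; ψ) < η₁`, the number of its elements of norm `k^t` is eventually at most
`k^{t(η₁((j+1)ε+1)-n)}`; the slice thus contributes a convergent geometric series. The remaining
`q` are handled by the trivial count `k^{t(m+1)}`. So the series defining `η(ψ)` converges at every
`η > δ(ψ)`, whence `η(ψ) ≤ δ(ψ)`. -/

lemma one_lt_card : (1 : ℝ) < Fintype.card F := by
  exact_mod_cast Fintype.one_lt_card

lemma pabs_nonneg (p : F[X]) : 0 ≤ pabs p := by
  unfold pabs
  split_ifs <;> positivity

lemma pabs_le_pow {p : F[X]} {d : ℕ} (hp : p.natDegree ≤ d) :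
    pabs p ≤ (Fintype.card F : ℝ) ^ d := by
  unfold pabs
  split_ifs
  · positivity
  · exact pow_le_pow_right₀ one_lt_card.le hp

section VectorDegree

variable {R : Type*} [Semiring R] {m : ℕ}

def maxNatDegree (q : Fin m → R[X]) : ℕ := Finset.univ.sup fun i => (q i).natDegree

lemma natDegree_le_maxNatDegree (q : Fin m → R[X]) (i : Fin m) :
    (q i).natDegree ≤ maxNatDegree q :=
  Finset.le_sup (f := fun i => (q i).natDegree) (Finset.mem_univ i)

lemma exists_ne_zero_natDegree_eq_maxNatDegree {q : Fin m → R[X]} (hq : q ≠ 0) :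
    ∃ i, q i ≠ 0 ∧ (q i).natDegree = maxNatDegree q := by
  obtain ⟨i₀, hi₀⟩ := Function.ne_iff.mp hq
  obtain ⟨j, -, hj⟩ :=
    Finset.exists_mem_eq_sup Finset.univ ⟨i₀, Finset.mem_univ _⟩ fun i => (q i).natDegree
  by_cases hqj : q j = 0
  · have h₀ : maxNatDegree q = 0 := by rw [maxNatDegree, hj, hqj, natDegree_zero]
    exact ⟨i₀, hi₀, by have := natDegree_le_maxNatDegree q i₀; omega⟩
  · exact ⟨j, hqj, hj.symm⟩

lemma injOn_coeff (d : ℕ) :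
    Set.InjOn (fun (q : Fin m → R[X]) i (k : Fin (d + 1)) => (q i).coeff k)
      {q | maxNatDegree q ≤ d} := by
  intro q hq q' hq' h
  ext i k
  by_cases hk : k ≤ d
  · exact congrFun (congrFun h i) ⟨k, Nat.lt_succ_of_le hk⟩
  · have hlt : ∀ p : Fin m → R[X], maxNatDegree p ≤ d → (p i).natDegree < k := fun p hp =>
      (natDegree_le_maxNatDegree p i).trans_lt (hp.trans_lt (not_le.mp hk))
    rw [coeff_eq_zero_of_natDegree_lt (hlt q hq), coeff_eq_zero_of_natDegree_lt (hlt q' hq')]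

lemma finite_maxNatDegree_le [Finite R] (d : ℕ) :
    {q : Fin m → R[X] | maxNatDegree q ≤ d}.Finite :=
  Set.Finite.of_finite_image (Set.toFinite _) (injOn_coeff d)

lemma ncard_maxNatDegree_le [Fintype R] (d : ℕ) :
    {q : Fin m → R[X] | maxNatDegree q ≤ d}.ncard ≤ (Fintype.card R ^ (d + 1)) ^ m := by
  calc _ ≤ (Set.univ : Set (Fin m → Fin (d + 1) → R)).ncard :=
        Set.ncard_le_ncard_of_injOn _ (fun _ _ => Set.mem_univ _) (injOn_coeff d)
    _ = _ := by simp [Set.ncard_univ]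

end VectorDegree

section Norm

variable {m : ℕ}

lemma qnorm_eq_pow {q : Fin m → F[X]} (hq : q ≠ 0) :
    qnorm q = (Fintype.card F : ℝ) ^ maxNatDegree q := by
  obtain ⟨i, hi, hdeg⟩ := exists_ne_zero_natDegree_eq_maxNatDegree hq
  have : Nonempty (Fin m) := ⟨i⟩
  refine le_antisymm (ciSup_le fun j => pabs_le_pow (natDegree_le_maxNatDegree q j)) ?_
  calc (Fintype.card F : ℝ) ^ maxNatDegree q = pabs (q i) := by rw [pabs, if_neg hi, hdeg]
    _ ≤ qnorm q := le_ciSup (f := fun j => pabs (q j)) (Set.finite_range _).bddAbove i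

lemma qnorm_zero : qnorm (0 : Fin m → F[X]) = 0 := by
  simp [qnorm, pabs]

lemma qnorm_nonneg (q : Fin m → F[X]) : 0 ≤ qnorm q :=
  Real.iSup_nonneg fun i => pabs_nonneg (q i)

lemma one_le_qnorm {q : Fin m → F[X]} (hq : q ≠ 0) : 1 ≤ qnorm q := by
  rw [qnorm_eq_pow hq]
  exact one_le_pow₀ one_lt_card.le

lemma maxNatDegree_le_log_of_qnorm_le {q : Fin m → F[X]} {N : ℕ} (h : qnorm q ≤ N) :
    maxNatDegree q ≤ Nat.log (Fintype.card F) N := by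
  rcases eq_or_ne q 0 with rfl | hq
  · simp [maxNatDegree]
  · refine Nat.le_log_of_pow_le Fintype.one_lt_card ?_
    rw [qnorm_eq_pow hq] at h
    exact_mod_cast h

lemma finite_qnorm_le (N : ℕ) : {q : Fin m → F[X] | qnorm q ≤ N}.Finite :=
  (finite_maxNatDegree_le _).subset fun _ => maxNatDegree_le_log_of_qnorm_le

lemma ncard_qnorm_le {N : ℕ} (hN : N ≠ 0) :
    {q : Fin m → F[X] | qnorm q ≤ N}.ncard ≤ (Fintype.card F * N) ^ m := by
  calc _ ≤ {q : Fin m → F[X] | maxNatDegree q ≤ Nat.log (Fintype.card F) N}.ncard :=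
        Set.ncard_le_ncard (fun _ => maxNatDegree_le_log_of_qnorm_le) (finite_maxNatDegree_le _)
    _ ≤ (Fintype.card F ^ (Nat.log (Fintype.card F) N + 1)) ^ m := ncard_maxNatDegree_le _
    _ ≤ (Fintype.card F * N) ^ m := by
        rw [pow_succ, mul_comm]
        gcongr
        exact Nat.pow_log_le_self _ hN

lemma eventually_ncard_maxNatDegree_eq_le :
    ∀ᶠ t : ℕ in atTop, ({q : Fin m → F[X] | q ≠ 0 ∧ maxNatDegree q = t}.ncard : ℝ) ≤
      (Fintype.card F : ℝ) ^ ((t : ℝ) * (m + 1)) := by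
  filter_upwards [eventually_ge_atTop m] with t ht
  have hcount : {q : Fin m → F[X] | q ≠ 0 ∧ maxNatDegree q = t}.ncard ≤
      Fintype.card F ^ (t * (m + 1)) :=
    calc _ ≤ {q : Fin m → F[X] | maxNatDegree q ≤ t}.ncard :=
          Set.ncard_le_ncard (fun q hq => hq.2.le) (finite_maxNatDegree_le t)
      _ ≤ (Fintype.card F ^ (t + 1)) ^ m := ncard_maxNatDegree_le t
      _ ≤ Fintype.card F ^ (t * (m + 1)) := by
          rw [← pow_mul]
          exact Nat.pow_le_pow_right Fintype.card_pos (by nlinarith)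
  rw [← Nat.cast_succ, ← Nat.cast_mul, Real.rpow_natCast]
  exact_mod_cast hcount

end Norm

section Counting

open scoped ENNReal Topology

variable {m : ℕ} (ψ : (Fin m → F[X]) → ℝ)

def approxSet (v : ℝ) : Set (Fin m → F[X]) := {q | qnorm q ^ (-v) ≤ ψ q}

lemma Cpsi_eq_ncard (v : ℝ) (N : ℕ) :
    Cpsi ψ v N = {q | qnorm q ≤ N ∧ qnorm q ^ (-v) ≤ ψ q}.ncard :=
  Nat.card_coe_set_eq _

lemma ncard_le_Cpsi {v : ℝ} {N : ℕ} {s : Set (Fin m → F[X])}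
    (hs : s ⊆ {q | qnorm q ≤ N ∧ qnorm q ^ (-v) ≤ ψ q}) : s.ncard ≤ Cpsi ψ v N := by
  rw [Cpsi_eq_ncard]
  exact Set.ncard_le_ncard hs ((finite_qnorm_le N).subset fun _ hq => hq.1)

lemma Cpsi_le (v : ℝ) {N : ℕ} (hN : N ≠ 0) : Cpsi ψ v N ≤ (Fintype.card F * N) ^ m := by
  rw [Cpsi_eq_ncard]
  exact (Set.ncard_le_ncard (fun _ hq => hq.1) (finite_qnorm_le N)).trans (ncard_qnorm_le hN)

lemma tendsto_Cpsi_of_infinite {v : ℝ} (h : (approxSet ψ v).Infinite) :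
    Tendsto (fun N => Cpsi ψ v N) atTop atTop := by
  refine tendsto_atTop_atTop.2 fun B => ?_
  obtain ⟨s, hsA, rfl⟩ := h.exists_subset_card_eq B
  refine ⟨s.sup fun q => ⌈qnorm q⌉₊, fun N hN => ?_⟩
  rw [← Set.ncard_coe_finset]
  refine ncard_le_Cpsi ψ fun q hq => ⟨?_, hsA hq⟩
  calc qnorm q ≤ ⌈qnorm q⌉₊ := Nat.le_ceil _
    _ ≤ N := by exact_mod_cast (Finset.le_sup (f := fun q => ⌈qnorm q⌉₊) hq).trans hN

lemma natCast_mul_rpow_eq_ofReal (c : ℕ) {N : ℕ} (hN : N ≠ 0) (r : ℝ) :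
    (c : ℝ≥0∞) * (N : ℝ≥0∞) ^ r = ENNReal.ofReal (c * (N : ℝ) ^ r) := by
  rw [ENNReal.ofReal_mul (Nat.cast_nonneg c), ← ENNReal.ofReal_rpow_of_pos (by positivity),
    ENNReal.ofReal_natCast, ENNReal.ofReal_natCast]

lemma limsup_Cpsi_mul_rpow_eq_zero (v : ℝ) {γ : ℝ} (hγ : (m : ℝ) < γ) :
    atTop.limsup (fun N : ℕ => (Cpsi ψ v N : ℝ≥0∞) * (N : ℝ≥0∞) ^ (-γ)) = 0 := by
  have hbound : Tendsto (fun N : ℕ => (Fintype.card F : ℝ) ^ m * (N : ℝ) ^ ((m : ℝ) - γ))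
      atTop (𝓝 0) := by
    have := (tendsto_rpow_neg_atTop (sub_pos.2 hγ)).comp tendsto_natCast_atTop_atTop
    simpa [Function.comp_def] using this.const_mul ((Fintype.card F : ℝ) ^ m)
  have hreal : Tendsto (fun N : ℕ => (Cpsi ψ v N : ℝ) * (N : ℝ) ^ (-γ)) atTop (𝓝 0) := by
    refine squeeze_zero' (.of_forall fun N => by positivity) ?_ hbound
    filter_upwards [eventually_ne_atTop 0] with N hN
    have hC : (Cpsi ψ v N : ℝ) ≤ (Fintype.card F : ℝ) ^ m * (N : ℝ) ^ m := by
      rw [← mul_pow]; exact_mod_cast Cpsi_le ψ v hN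
    calc (Cpsi ψ v N : ℝ) * (N : ℝ) ^ (-γ)
        ≤ (Fintype.card F : ℝ) ^ m * (N : ℝ) ^ m * (N : ℝ) ^ (-γ) := by gcongr
      _ = (Fintype.card F : ℝ) ^ m * (N : ℝ) ^ ((m : ℝ) - γ) := by
        rw [sub_eq_add_neg, Real.rpow_add (by positivity), Real.rpow_natCast, mul_assoc]
  refine Tendsto.limsup_eq ?_
  refine (ENNReal.ofReal_zero ▸ ENNReal.tendsto_ofReal hreal).congr' ?_
  filter_upwards [eventually_ne_atTop 0] with N hN
  exact (natCast_mul_rpow_eq_ofReal _ hN _).symm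

lemma le_of_limsup_Cpsi_mul_rpow_pos {v γ : ℝ}
    (h : 0 < atTop.limsup (fun N : ℕ => (Cpsi ψ v N : ℝ≥0∞) * (N : ℝ≥0∞) ^ (-γ))) :
    γ ≤ m :=
  not_lt.1 fun hγ => h.ne' (limsup_Cpsi_mul_rpow_eq_zero ψ v hγ)

lemma gammaPsi_le (v : ℝ) : gammaPsi ψ v ≤ m :=
  Real.sSup_le (fun _ => le_of_limsup_Cpsi_mul_rpow_pos ψ) (Nat.cast_nonneg m)

lemma gammaPsi_nonneg {v : ℝ} (h : Tendsto (fun N => Cpsi ψ v N) atTop atTop) :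
    0 ≤ gammaPsi ψ v := by
  refine Real.sSup_nonneg' ⟨0, ?_, le_rfl⟩
  show 0 < atTop.limsup (fun N : ℕ => (Cpsi ψ v N : ℝ≥0∞) * (N : ℝ≥0∞) ^ (-(0 : ℝ)))
  simp only [neg_zero, ENNReal.rpow_zero, mul_one]
  have h' : Tendsto (fun N => (Cpsi ψ v N : ℝ≥0∞)) atTop (𝓝 ⊤) :=
    ENNReal.tendsto_nat_nhds_top.comp h
  rw [h'.limsup_eq]
  exact ENNReal.zero_lt_top

lemma eventually_Cpsi_le_rpow {v γ : ℝ} (hγ : gammaPsi ψ v < γ) :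
    ∀ᶠ N : ℕ in atTop, (Cpsi ψ v N : ℝ) ≤ (N : ℝ) ^ γ := by
  have hzero : atTop.limsup (fun N : ℕ => (Cpsi ψ v N : ℝ≥0∞) * (N : ℝ≥0∞) ^ (-γ)) = 0 := by
    refine le_antisymm (not_lt.1 fun h => hγ.not_ge ?_) bot_le
    exact le_csSup ⟨m, fun _ => le_of_limsup_Cpsi_mul_rpow_pos ψ⟩ h
  filter_upwards [eventually_lt_of_limsup_lt (hzero ▸ zero_lt_one), eventually_ne_atTop 0]
    with N hlt hN
  rw [natCast_mul_rpow_eq_ofReal _ hN, ENNReal.ofReal_lt_one, Real.rpow_neg (Nat.cast_nonneg N),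
    ← div_eq_mul_inv, div_lt_one (by positivity)] at hlt
  exact hlt.le

variable (n : ℕ)

lemma deltaPsiV_le {v : ℝ} (hv : 0 ≤ v) : deltaPsiV n ψ v ≤ n + m := by
  unfold deltaPsiV
  split_ifs
  · rw [div_le_iff₀ (by linarith)]
    nlinarith [gammaPsi_le ψ v, mul_nonneg (by positivity : (0 : ℝ) ≤ n + m) hv]
  · positivity

lemma deltaPsiV_nonneg {v : ℝ} (hv : 0 ≤ v) : 0 ≤ deltaPsiV n ψ v := by
  unfold deltaPsiV
  split_ifs with h
  · exact div_nonneg (add_nonneg (Nat.cast_nonneg n) (gammaPsi_nonneg ψ h)) (by linarith)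
  · exact le_rfl

lemma deltaPsiV_le_deltaPsi {v : ℝ} (hv : 0 ≤ v) : deltaPsiV n ψ v ≤ deltaPsi n ψ :=
  le_csSup ⟨n + m, by rintro _ ⟨v, hv, rfl⟩; exact deltaPsiV_le ψ n hv⟩ ⟨v, hv, rfl⟩

lemma deltaPsi_nonneg : 0 ≤ deltaPsi n ψ :=
  Real.sSup_nonneg (by rintro _ ⟨v, hv, rfl⟩; exact deltaPsiV_nonneg ψ n hv)

lemma eventually_ncard_approxSet_le {v η : ℝ} (hv : 0 ≤ v) (hδ : deltaPsiV n ψ v < η) :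
    ∀ᶠ t : ℕ in atTop, ({q ∈ approxSet ψ v | q ≠ 0 ∧ maxNatDegree q = t}.ncard : ℝ) ≤
      (Fintype.card F : ℝ) ^ ((t : ℝ) * (η * (v + 1) - n)) := by
  by_cases h : Tendsto (fun N => Cpsi ψ v N) atTop atTop
  · rw [deltaPsiV, if_pos h, div_lt_iff₀ (by linarith)] at hδ
    have hC := (tendsto_pow_atTop_atTop_of_one_lt (Fintype.one_lt_card (α := F))).eventually
      (eventually_Cpsi_le_rpow ψ (γ := η * (v + 1) - n) (by linarith))
    filter_upwards [hC] with t ht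
    have hsub : {q ∈ approxSet ψ v | q ≠ 0 ∧ maxNatDegree q = t} ⊆
        {q | qnorm q ≤ (Fintype.card F ^ t : ℕ) ∧ qnorm q ^ (-v) ≤ ψ q} := by
      rintro q ⟨hqA, hq, rfl⟩
      refine ⟨?_, hqA⟩
      rw [qnorm_eq_pow hq]
      push_cast
      exact le_rfl
    calc _ ≤ (Cpsi ψ v (Fintype.card F ^ t) : ℝ) := by exact_mod_cast ncard_le_Cpsi ψ hsub
      _ ≤ _ := ht
      _ = _ := by
        push_cast
        rw [← Real.rpow_natCast, ← Real.rpow_mul (by positivity)]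
  · have hfin : (approxSet ψ v).Finite := by
      by_contra hinf
      exact h (tendsto_Cpsi_of_infinite ψ hinf)
    obtain ⟨d, hd⟩ := (hfin.image maxNatDegree).bddAbove
    filter_upwards [eventually_gt_atTop d] with t ht
    have hempty : {q ∈ approxSet ψ v | q ≠ 0 ∧ maxNatDegree q = t} = ∅ := by
      refine Set.eq_empty_of_forall_notMem ?_
      rintro q ⟨hqA, -, rfl⟩
      exact ht.not_ge (hd ⟨q, hqA, rfl⟩)
    rw [hempty, Set.ncard_empty, Nat.cast_zero]
    positivity

end Counting

lemma summable_of_le_of_ncard_fiber {α : Type*} {g : α → ℝ} (hg : 0 ≤ g) (T : α → ℕ)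
    {b : ℕ → ℝ} (hb : 0 ≤ b) (hgb : ∀ a, g a ≤ b (T a))
    (hfin : ∀ t, {a | g a ≠ 0 ∧ T a = t}.Finite)
    (hsum : Summable fun t => ({a | g a ≠ 0 ∧ T a = t}.ncard : ℝ) * b t) : Summable g := by
  classical
  refine summable_of_sum_le (c := ∑' t, ({a | g a ≠ 0 ∧ T a = t}.ncard : ℝ) * b t) hg fun u => ?_
  set u' := u.filter fun a => g a ≠ 0
  have hfiber : ∀ t, ∑ a ∈ u' with T a = t, g a ≤ ({a | g a ≠ 0 ∧ T a = t}.ncard : ℝ) * b t := by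
    intro t
    have hcard : (u'.filter fun a => T a = t).card ≤ {a | g a ≠ 0 ∧ T a = t}.ncard := by
      rw [← Set.ncard_coe_finset]
      refine Set.ncard_le_ncard (fun a ha => ?_) (hfin t)
      simp only [Finset.coe_filter, Finset.mem_filter, u'] at ha
      exact ⟨ha.1.2, ha.2⟩
    calc ∑ a ∈ u' with T a = t, g a ≤ (u'.filter fun a => T a = t).card • b t :=
          Finset.sum_le_card_nsmul _ _ _ fun a ha => (Finset.mem_filter.1 ha).2 ▸ hgb a
      _ ≤ _ := by rw [nsmul_eq_mul]; gcongr; exact hb t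
  calc ∑ a ∈ u, g a = ∑ t ∈ u'.image T, ∑ a ∈ u' with T a = t, g a := by
        rw [Finset.sum_fiberwise_of_maps_to fun a ha => Finset.mem_image_of_mem T ha,
          Finset.sum_filter_ne_zero]
    _ ≤ ∑ t ∈ u'.image T, ({a | g a ≠ 0 ∧ T a = t}.ncard : ℝ) * b t :=
        Finset.sum_le_sum fun t _ => hfiber t
    _ ≤ ∑' t, ({a | g a ≠ 0 ∧ T a = t}.ncard : ℝ) * b t :=
        hsum.sum_le_tsum _ fun t _ => mul_nonneg (Nat.cast_nonneg _) (hb t)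

lemma le_or_exists_le_and_le_of_le_zero {α : Type*} [LinearOrder α] {a : ℕ → α} {y : α}
    (h₀ : y ≤ a 0) (J : ℕ) : y ≤ a J ∨ ∃ j < J, a (j + 1) ≤ y ∧ y ≤ a j := by
  induction J with
  | zero => exact Or.inl h₀
  | succ J ih =>
    rcases ih with hJ | ⟨j, hj, hbracket⟩
    · rcases le_or_gt y (a (J + 1)) with hJ' | hJ'
      · exact Or.inl hJ'
      · exact Or.inr ⟨J, J.lt_succ_self, hJ'.le, hJ⟩
    · exact Or.inr ⟨j, hj.trans J.lt_succ_self, hbracket⟩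

section Summation

variable {m : ℕ} (n : ℕ) (ψ : (Fin m → F[X]) → ℝ)

def etaSummand (η : ℝ) (q : Fin m → F[X]) : ℝ := qnorm q ^ n * (ψ q / qnorm q) ^ η

def slice (A : Set (Fin m → F[X])) (w : ℝ) : Set (Fin m → F[X]) :=
  {q ∈ A | q ≠ 0 ∧ ψ q ≤ qnorm q ^ (-w)}

variable {ψ}

lemma etaSummand_nonneg (hψ : ∀ q, 0 ≤ ψ q) (η : ℝ) : 0 ≤ etaSummand n ψ η := fun q =>
  mul_nonneg (pow_nonneg (qnorm_nonneg q) n)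
    (Real.rpow_nonneg (div_nonneg (hψ q) (qnorm_nonneg q)) η)

lemma etaSummand_zero {η : ℝ} (hη : η ≠ 0) : etaSummand n ψ η 0 = 0 := by
  simp [etaSummand, qnorm_zero, Real.zero_rpow hη]

lemma etaSummand_le {η w : ℝ} {q : Fin m → F[X]} (hη : 0 ≤ η) (hq : q ≠ 0) (hψ : 0 ≤ ψ q)
    (hw : ψ q ≤ qnorm q ^ (-w)) :
    etaSummand n ψ η q ≤ qnorm q ^ ((n : ℝ) - (1 + w) * η) := by
  have hx : 0 < qnorm q := one_pos.trans_le (one_le_qnorm hq)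
  calc etaSummand n ψ η q ≤ qnorm q ^ n * (qnorm q ^ (-w) / qnorm q) ^ η := by
        unfold etaSummand; gcongr
    _ = qnorm q ^ ((n : ℝ) - (1 + w) * η) := by
        rw [← Real.rpow_sub_one hx.ne', ← Real.rpow_mul hx.le, ← Real.rpow_natCast,
          ← Real.rpow_add hx]
        ring_nf

lemma etaExp_le_of_summable {η : ℝ} (hη : 0 ≤ η) (h : Summable (etaSummand n ψ η)) :
    etaExp n ψ ≤ η := by
  by_cases hbdd : BddBelow {η | Summable (etaSummand n ψ η)}
  · exact csInf_le hbdd h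
  · exact (Real.sInf_of_not_bddBelow hbdd).trans_le hη

lemma summable_indicator_etaSummand (hψ : ∀ q, 0 ≤ ψ q) {A : Set (Fin m → F[X])}
    {w γ η : ℝ} (hη : 0 ≤ η)
    (hA : ∀ᶠ t : ℕ in atTop, ({q ∈ A | q ≠ 0 ∧ maxNatDegree q = t}.ncard : ℝ) ≤
      (Fintype.card F : ℝ) ^ ((t : ℝ) * γ))
    (hexp : γ + n - (1 + w) * η < 0) :
    Summable ((slice ψ A w).indicator (etaSummand n ψ η)) := by
  set K := (Fintype.card F : ℝ)
  have hK : 0 < K := one_pos.trans one_lt_card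
  set e := (n : ℝ) - (1 + w) * η
  have hsupp : ∀ t, {q | (slice ψ A w).indicator (etaSummand n ψ η) q ≠ 0 ∧ maxNatDegree q = t} ⊆
      {q ∈ A | q ≠ 0 ∧ maxNatDegree q = t} := by
    rintro t q ⟨hq, ht⟩
    have hqS := Set.mem_of_indicator_ne_zero hq
    exact ⟨hqS.1, hqS.2.1, ht⟩
  refine summable_of_le_of_ncard_fiber (Set.indicator_nonneg fun q _ => etaSummand_nonneg n hψ η q)
    maxNatDegree (b := fun t => K ^ ((t : ℝ) * e)) (fun t => by positivity) (fun q => ?_)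
    (fun t => (finite_maxNatDegree_le t).subset fun q hq => hq.2.le) ?_
  · by_cases hqS : q ∈ slice ψ A w
    · rw [Set.indicator_of_mem hqS]
      calc etaSummand n ψ η q ≤ qnorm q ^ e := etaSummand_le n hη hqS.2.1 (hψ q) hqS.2.2
        _ = K ^ ((maxNatDegree q : ℝ) * e) := by
          rw [qnorm_eq_pow hqS.2.1, ← Real.rpow_natCast, ← Real.rpow_mul hK.le]
    · rw [Set.indicator_of_notMem hqS]
      positivity
  · refine Summable.of_norm_bounded_eventually_nat (g := fun t => (K ^ (γ + e)) ^ t)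
      (summable_geometric_of_lt_one (by positivity)
        (Real.rpow_lt_one_of_one_lt_of_neg one_lt_card (by linarith))) ?_
    filter_upwards [hA] with t ht
    rw [Real.norm_of_nonneg (by positivity)]
    have hcount := Set.ncard_le_ncard (hsupp t)
      ((finite_maxNatDegree_le t).subset fun q hq => hq.2.2.le)
    calc _ ≤ K ^ ((t : ℝ) * γ) * K ^ ((t : ℝ) * e) := by
          gcongr
          exact le_trans (by exact_mod_cast hcount) ht
      _ = (K ^ (γ + e)) ^ t := by
          rw [← Real.rpow_add hK, ← Real.rpow_natCast, ← Real.rpow_mul hK.le]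
          ring_nf

lemma etaSummand_le_add_sum_indicator (hψ₀ : ∀ q, 0 ≤ ψ q) (hψ₁ : ∀ q, ψ q ≤ 1) {η ε V : ℝ}
    (hη : 0 < η) {J : ℕ} (hJ : V ≤ J * ε) (q : Fin m → F[X]) :
    etaSummand n ψ η q ≤ (slice ψ Set.univ V).indicator (etaSummand n ψ η) q +
      ∑ j ∈ Finset.range J,
        (slice ψ (approxSet ψ ((j + 1) * ε)) (j * ε)).indicator (etaSummand n ψ η) q := by
  have hind : ∀ S : Set (Fin m → F[X]), 0 ≤ S.indicator (etaSummand n ψ η) q :=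
    fun S => Set.indicator_nonneg (fun q _ => etaSummand_nonneg n hψ₀ η q) q
  have hsum := Finset.sum_nonneg fun j (_ : j ∈ Finset.range J) =>
    hind (slice ψ (approxSet ψ ((j + 1) * ε)) (j * ε))
  rcases eq_or_ne q 0 with rfl | hq
  · rw [etaSummand_zero n hη.ne']
    exact add_nonneg (hind _) hsum
  rcases le_or_exists_le_and_le_of_le_zero (a := fun j : ℕ => qnorm q ^ (-(j * ε)))
    (by simpa using hψ₁ q) J with hhigh | ⟨j, hj, hlow, hup⟩
  · have hqS : q ∈ slice ψ Set.univ V :=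
      ⟨trivial, hq, hhigh.trans (Real.rpow_le_rpow_of_exponent_le (one_le_qnorm hq) (by linarith))⟩
    rw [Set.indicator_of_mem hqS]
    exact le_add_of_nonneg_right hsum
  · have hqS : q ∈ slice ψ (approxSet ψ ((j + 1) * ε)) (j * ε) :=
      ⟨by simpa [approxSet] using hlow, hq, hup⟩
    calc etaSummand n ψ η q = _ := (Set.indicator_of_mem hqS _).symm
      _ ≤ ∑ j ∈ Finset.range J, _ := Finset.single_le_sum (f := fun j : ℕ =>
          (slice ψ (approxSet ψ ((j + 1) * ε)) (j * ε)).indicator (etaSummand n ψ η) q)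
          (fun j _ => hind _) (Finset.mem_range.2 hj)
      _ ≤ _ := le_add_of_nonneg_left (hind _)

theorem summable_etaSummand_of_deltaPsi_lt (hψ₀ : ∀ q, 0 ≤ ψ q) (hψ₁ : ∀ q, ψ q ≤ 1) {η : ℝ}
    (hη : deltaPsi n ψ < η) : Summable (etaSummand n ψ η) := by
  have hδ := deltaPsi_nonneg ψ n
  obtain ⟨η₁, hδη₁, hη₁η⟩ := exists_between hη
  have hη₁ : 0 < η₁ := hδ.trans_lt hδη₁
  have hη₀ : 0 < η := hη₁.trans hη₁η
  -- `ε` makes the `j`-th slice's exponent `η₁((j+1)ε+1) - (1+jε)η ≤ η₁(1+ε) - η` negative, and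
  -- `V` makes the exponent `m + 1 + n - (1+V)η` of the remaining part equal to `-η`.
  obtain ⟨ε, hε, hεη⟩ : ∃ ε > 0, η₁ * (1 + ε) < η :=
    ⟨(η - η₁) / (2 * η₁), by positivity, by field_simp; linarith⟩
  set V := ((m : ℝ) + n + 1) / η
  have hV : V * η = m + n + 1 := div_mul_cancel₀ _ hη₀.ne'
  have hJ : V ≤ (⌈V / ε⌉₊ : ℕ) * ε := (div_le_iff₀ hε).1 (Nat.le_ceil _)
  refine Summable.of_nonneg_of_le (etaSummand_nonneg n hψ₀ η)
    (etaSummand_le_add_sum_indicator n hψ₀ hψ₁ hη₀ hJ) (.add ?_ (summable_sum fun j _ => ?_))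
  · refine summable_indicator_etaSummand n hψ₀ (γ := m + 1) hη₀.le ?_ (by linarith)
    simpa only [Set.sep_univ] using eventually_ncard_maxNatDegree_eq_le
  · have hv : 0 ≤ ((j : ℝ) + 1) * ε := by positivity
    have hslack : (j : ℝ) * ε * (η₁ - η) ≤ 0 :=
      mul_nonpos_of_nonneg_of_nonpos (by positivity) (by linarith)
    exact summable_indicator_etaSummand n hψ₀ hη₀.le
      (eventually_ncard_approxSet_le ψ n hv ((deltaPsiV_le_deltaPsi ψ n hv).trans_lt hδη₁))
      (by linarith)

end Summation

theorem min_eta_le_min_delta_general {m n : ℕ}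
    (ψ : (Fin m → Polynomial F) → ℝ)
    (hnn : ∀ q, 0 ≤ ψ q) (hle1 : ∀ q, ψ q ≤ 1) :
    min (etaExp n ψ) (n : ℝ) ≤ min (deltaPsi n ψ) (n : ℝ) :=
  min_le_min_right _ <| le_of_forall_gt_imp_ge_of_dense fun _ hη =>
    etaExp_le_of_summable n ((deltaPsi_nonneg ψ n).trans hη.le)
      (summable_etaSummand_of_deltaPsi_lt n hnn hle1 hη)

/-- comparison of exponents, `min{δ(ψ), n} ≥ min{η(ψ), n}`. -/
theorem min_eta_le_min_delta {m n : ℕ} (hm : 0 < m) (hn : 0 < n)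
    (ψ : (Fin m → Polynomial F) → ℝ)
    (hval : ∀ q, ψ q = 0 ∨ ∃ r : ℤ, ψ q = (Fintype.card F : ℝ) ^ r)
    (hnn : ∀ q, 0 ≤ ψ q) (hle1 : ∀ q, ψ q ≤ 1)
    (hinfpos : {q : Fin m → Polynomial F | 0 < ψ q}.Infinite) :
    min (etaExp n ψ) (n : ℝ) ≤ min (deltaPsi n ψ) (n : ℝ) :=
  min_eta_le_min_delta_general ψ hnn hle1

end FFapprox
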